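/- Let A ⊂ ℝ^p be compact, s > 0, and w: A×A → [0,∞] bounded symmetric. If a greedy (w,s)-energy sequence (a_n) on A avoids some ball B(a, ε) with a ∈ A, ε > 0, then for every N ≥ 2 the weighted energy satisfies E_s^w(α_N) ≤ (‖w‖/ε^s)·N(N-1). Consequently, if E_s^w(α_N)/N² → ∞ (e.g. if E_s^w(α_N) ≥ C N^{1+s/d} with s > d), the greedy sequence is dense in A. -/

import Mathlib

open Filter Finset

/-! Let `K = C / ε^s`. Since the greedy point `a n` minimises the potential of `a 0, …, a (n-1)`
over `A`, its potential is at most that of the avoided centre `c`, which is at most `n K`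
because every `a i` is at distance `≥ ε` from `c`. By symmetry of `w`, adding `a n` raises the
energy by twice that potential, so the energy of the first `N` points is at most
`2 K (0 + 1 + ⋯ + (N-1)) = K N (N-1)`. If the greedy sequence is not dense, it avoids a ball
around a point of `A`, and then the energy divided by `N²` stays bounded. -/

theorem sum_range_succ_sum_range_succ_of_symm {R : Type*} [NonAssocSemiring R]
    (f : ℕ → ℕ → R) (hf : ∀ i j, f i j = f j i) (N : ℕ) :
    ∑ i ∈ range (N + 1), ∑ j ∈ range (N + 1), f i j =
      ∑ i ∈ range N, ∑ j ∈ range N, f i j + 2 * ∑ i ∈ range N, f N i + f N N := by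
  have hcol : ∑ i ∈ range N, f i N = ∑ i ∈ range N, f N i :=
    sum_congr rfl fun i _ => hf i N
  simp only [sum_range_succ, sum_add_distrib, hcol, two_mul, add_assoc]

theorem mul_rpow_neg_le_div_rpow {w C ε d s : ℝ} (hw0 : 0 ≤ w) (hwC : w ≤ C)
    (hε : 0 < ε) (hεd : ε ≤ d) (hs : 0 ≤ s) :
    w * d ^ (-s) ≤ C / ε ^ s := by
  have hd : d ^ (-s) ≤ (ε ^ s)⁻¹ := by
    rw [Real.rpow_neg (hε.le.trans hεd)]
    exact inv_anti₀ (Real.rpow_pos_of_pos hε s) (Real.rpow_le_rpow hε.le hεd hs)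
  calc w * d ^ (-s) ≤ C * (ε ^ s)⁻¹ :=
        mul_le_mul hwC hd (Real.rpow_nonneg (hε.le.trans hεd) _) (hw0.trans hwC)
    _ = C / ε ^ s := (div_eq_mul_inv C _).symm

section Energy

variable {E : Type*} [SeminormedAddCommGroup E] (w : E → E → ℝ) (s : ℝ) (a : ℕ → E)

noncomputable def rieszPotential (n : ℕ) (x : E) : ℝ :=
  ∑ i ∈ range n, w x (a i) * ‖x - a i‖ ^ (-s)

noncomputable def weightedRieszEnergy (N : ℕ) : ℝ :=
  ∑ i ∈ range N, ∑ j ∈ range N, if i = j then 0 else w (a i) (a j) * ‖a i - a j‖ ^ (-s)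

variable {w s a}

theorem weightedRieszEnergy_succ (hwsym : ∀ x y, w x y = w y x) (N : ℕ) :
    weightedRieszEnergy w s a (N + 1) =
      weightedRieszEnergy w s a N + 2 * rieszPotential w s a N (a N) := by
  rw [weightedRieszEnergy, sum_range_succ_sum_range_succ_of_symm]
  · have hrow : ∑ i ∈ range N,
        (if N = i then 0 else w (a N) (a i) * ‖a N - a i‖ ^ (-s)) =
          rieszPotential w s a N (a N) :=
      sum_congr rfl fun i hi => if_neg (mem_range.mp hi).ne'
    rw [hrow, if_pos rfl, add_zero, weightedRieszEnergy]
  · intro i j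
    by_cases h : i = j
    · rw [if_pos h, if_pos h.symm]
    · rw [if_neg h, if_neg (Ne.symm h), hwsym, norm_sub_rev]

theorem rieszPotential_le {C ε : ℝ} {x : E} {n : ℕ} (hw0 : ∀ i, 0 ≤ w x (a i))
    (hwC : ∀ i, w x (a i) ≤ C) (hε : 0 < ε) (hfar : ∀ i, ε ≤ ‖x - a i‖) (hs : 0 ≤ s) :
    rieszPotential w s a n x ≤ n * (C / ε ^ s) := by
  have := sum_le_card_nsmul (range n) (fun i => w x (a i) * ‖x - a i‖ ^ (-s)) (C / ε ^ s)
    fun i _ => mul_rpow_neg_le_div_rpow (hw0 i) (hwC i) hε (hfar i) hs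
  rwa [card_range, nsmul_eq_mul] at this

theorem weightedRieszEnergy_le_of_rieszPotential_le (hwsym : ∀ x y, w x y = w y x) {K : ℝ}
    (hpot : ∀ n, rieszPotential w s a n (a n) ≤ n * K) (N : ℕ) :
    weightedRieszEnergy w s a N ≤ K * N * (N - 1) := by
  induction N with
  | zero => simp [weightedRieszEnergy]
  | succ N ih =>
    rw [weightedRieszEnergy_succ hwsym]
    push_cast
    linarith [hpot N]

theorem weightedRieszEnergy_le_of_avoids_ball {A : Set E} {C : ℝ}
    (hw0 : ∀ x y, 0 ≤ w x y) (hwsym : ∀ x y, w x y = w y x)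
    (hC : ∀ x ∈ A, ∀ y ∈ A, w x y ≤ C) (ha : ∀ n, a n ∈ A) (hs : 0 ≤ s)
    (hgreedy : ∀ n, ∀ x ∈ A, rieszPotential w s a n (a n) ≤ rieszPotential w s a n x)
    {c : E} (hc : c ∈ A) {ε : ℝ} (hε : 0 < ε) (havoid : ∀ n, a n ∉ Metric.ball c ε) (N : ℕ) :
    weightedRieszEnergy w s a N ≤ C / ε ^ s * N * (N - 1) := by
  have hfar : ∀ i, ε ≤ ‖c - a i‖ := fun i => by
    simpa [Metric.mem_ball, dist_eq_norm, norm_sub_rev] using havoid i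
  refine weightedRieszEnergy_le_of_rieszPotential_le hwsym (fun n => ?_) N
  exact (hgreedy n c hc).trans
    (rieszPotential_le (fun i => hw0 c (a i)) (fun i => hC c hc (a i) (ha i)) hε hfar hs)

end Energy

theorem not_tendsto_div_sq_atTop_of_le_mul_mul_sub_one {f : ℕ → ℝ} {K : ℝ}
    (hf : ∀ N : ℕ, f N ≤ K * N * (N - 1)) :
    ¬ Tendsto (fun N : ℕ => f N / (N : ℝ) ^ 2) atTop atTop := by
  intro hT
  obtain ⟨N, hbig, hN⟩ := ((hT.eventually_gt_atTop |K|).and (eventually_ge_atTop 1)).exists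
  have hN' : (1 : ℝ) ≤ N := by exact_mod_cast hN
  have hle : f N ≤ |K| * (N : ℝ) ^ 2 :=
    calc f N ≤ K * (N * (N - 1)) := (hf N).trans_eq (mul_assoc _ _ _)
      _ ≤ |K| * (N * (N - 1)) :=
        mul_le_mul_of_nonneg_right (le_abs_self K) (by nlinarith)
      _ ≤ |K| * (N : ℝ) ^ 2 := by gcongr; nlinarith
  rw [lt_div_iff₀ (by positivity)] at hbig
  linarith

theorem greedy_avoiding_ball_energy_bound_general {P : ℕ}
    (A : Set (EuclideanSpace ℝ (Fin P)))
    (s : ℝ) (hs : 0 < s)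
    (w : EuclideanSpace ℝ (Fin P) → EuclideanSpace ℝ (Fin P) → ℝ)
    (hw0 : ∀ x y, 0 ≤ w x y) (hwsym : ∀ x y, w x y = w y x)
    (C : ℝ) (hC : ∀ x ∈ A, ∀ y ∈ A, w x y ≤ C)
    (a : ℕ → EuclideanSpace ℝ (Fin P)) (ha : ∀ n, a n ∈ A)
    (hgreedy : ∀ n, ∀ x ∈ A,
      ∑ i ∈ Finset.range n, w (a n) (a i) * ‖a n - a i‖ ^ (-s) ≤
        ∑ i ∈ Finset.range n, w x (a i) * ‖x - a i‖ ^ (-s)) :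
    (∀ c ∈ A, ∀ ε : ℝ, 0 < ε → (∀ n, a n ∉ Metric.ball c ε) →
      ∀ N : ℕ, 2 ≤ N →
        ∑ i ∈ Finset.range N, ∑ j ∈ Finset.range N,
            (if i = j then 0 else w (a i) (a j) * ‖a i - a j‖ ^ (-s)) ≤
          (C / ε ^ s) * N * ((N : ℝ) - 1)) ∧
    (Tendsto (fun N : ℕ =>
        (∑ i ∈ Finset.range N, ∑ j ∈ Finset.range N,
          (if i = j then 0 else w (a i) (a j) * ‖a i - a j‖ ^ (-s))) / (N : ℝ) ^ 2)
        atTop atTop →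
      A ⊆ closure (Set.range a)) := by
  have hbound : ∀ c ∈ A, ∀ ε : ℝ, 0 < ε → (∀ n, a n ∉ Metric.ball c ε) → ∀ N : ℕ,
      weightedRieszEnergy w s a N ≤ C / ε ^ s * N * (N - 1) := fun c hc ε hε havoid =>
    weightedRieszEnergy_le_of_avoids_ball hw0 hwsym hC ha hs.le hgreedy hc hε havoid
  refine ⟨fun c hc ε hε havoid N _ => hbound c hc ε hε havoid N, fun hT c hc => ?_⟩
  by_contra hcl
  obtain ⟨ε, hε, hball⟩ := Metric.isOpen_iff.mp isClosed_closure.isOpen_compl c hcl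
  have havoid : ∀ n, a n ∉ Metric.ball c ε := fun n hn => hball hn (subset_closure ⟨n, rfl⟩)
  exact not_tendsto_div_sq_atTop_of_le_mul_mul_sub_one (hbound c hc ε hε havoid) hT

/-- If a greedy `(w,s)`-energy sequence on a compact set `A ⊂ ℝ^P` (with `w` bounded by
`C` and symmetric) avoids a ball `B(c,ε)` with `c ∈ A`, then its weighted energy
satisfies `E_s^w(α_N) ≤ (C/ε^s)·N(N-1)`. Consequently, if `E_s^w(α_N)/N² → ∞`, the
greedy sequence is dense in `A`. -/
theorem greedy_avoiding_ball_energy_bound {P : ℕ}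
    (A : Set (EuclideanSpace ℝ (Fin P))) (hA : IsCompact A)
    (s : ℝ) (hs : 0 < s)
    (w : EuclideanSpace ℝ (Fin P) → EuclideanSpace ℝ (Fin P) → ℝ)
    (hw0 : ∀ x y, 0 ≤ w x y) (hwsym : ∀ x y, w x y = w y x)
    (C : ℝ) (hC : ∀ x ∈ A, ∀ y ∈ A, w x y ≤ C)
    (a : ℕ → EuclideanSpace ℝ (Fin P)) (ha : ∀ n, a n ∈ A)
    (hgreedy : ∀ n, ∀ x ∈ A,
      ∑ i ∈ Finset.range n, w (a n) (a i) * ‖a n - a i‖ ^ (-s) ≤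
        ∑ i ∈ Finset.range n, w x (a i) * ‖x - a i‖ ^ (-s)) :
    (∀ c ∈ A, ∀ ε : ℝ, 0 < ε → (∀ n, a n ∉ Metric.ball c ε) →
      ∀ N : ℕ, 2 ≤ N →
        ∑ i ∈ Finset.range N, ∑ j ∈ Finset.range N,
            (if i = j then 0 else w (a i) (a j) * ‖a i - a j‖ ^ (-s)) ≤
          (C / ε ^ s) * N * ((N : ℝ) - 1)) ∧
    (Tendsto (fun N : ℕ =>
        (∑ i ∈ Finset.range N, ∑ j ∈ Finset.range N,
          (if i = j then 0 else w (a i) (a j) * ‖a i - a j‖ ^ (-s))) / (N : ℝ) ^ 2)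
        atTop atTop →
      A ⊆ closure (Set.range a)) :=
  greedy_avoiding_ball_energy_bound_general A s hs w hw0 hwsym C hC a ha hgreedy
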